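/- Every nilpotent symplectic Lie algebra (g, ω) whose center is nondegenerate with respect to ω is abelian. -/

import Mathlib

namespace Stmt4

variable {g : Type*} [LieRing g] [LieAlgebra ℝ g]

/-- The center of `g` as a submodule. -/
def zc (g : Type*) [LieRing g] [LieAlgebra ℝ g] : Submodule ℝ g where
  carrier := {x | ∀ y : g, ⁅x, y⁆ = 0}
  add_mem' := fun hx hy => by intro z; rw [add_lie, hx z, hy z, add_zero]
  zero_mem' := fun z => zero_lie z
  smul_mem' := fun c x hx => by intro z; rw [smul_lie, hx z, smul_zero]

/-- The `ω`-orthogonal complement of a submodule. -/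
def orth (ω : g →ₗ[ℝ] g →ₗ[ℝ] ℝ) (U : Submodule ℝ g) : Submodule ℝ g where
  carrier := {x | ∀ y ∈ U, ω x y = 0}
  add_mem' := fun hx hy => by
    intro z hz; rw [map_add, LinearMap.add_apply, hx z hz, hy z hz, add_zero]
  zero_mem' := fun z _ => by rw [map_zero, LinearMap.zero_apply]
  smul_mem' := fun c x hx => by
    intro z hz; rw [map_smul, LinearMap.smul_apply, hx z hz, smul_zero]

/-- a nilpotent symplectic Lie algebra whose center is nondegenerate
with respect to the symplectic form is abelian. -/
theorem nilpotent_symplectic_nondeg_center_abelian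
    [FiniteDimensional ℝ g] [LieRing.IsNilpotent g]
    (ω : g →ₗ[ℝ] g →ₗ[ℝ] ℝ)
    (hskew : ∀ X Y : g, ω X Y = - ω Y X)
    (hnd : ∀ X : g, (∀ Y : g, ω X Y = 0) → X = 0)
    (hclosed : ∀ X Y Z : g, ω ⁅X, Y⁆ Z - ω ⁅X, Z⁆ Y + ω ⁅Y, Z⁆ X = 0)
    (hznd : ∀ X ∈ zc g, (∀ Y ∈ zc g, ω X Y = 0) → X = 0) :
    ∀ X Y : g, ⁅X, Y⁆ = 0 := by
  have hzc : ∀ X : g, X ∈ zc g ↔ ∀ y : g, ⁅X, y⁆ = 0 := fun X => Iff.rfl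
  have horth : ∀ X Y Z : g, Z ∈ zc g → ω ⁅X, Y⁆ Z = 0 := by
    intro X Y Z hZ
    have h := hclosed X Y Z
    have h1 : ⁅X, Z⁆ = 0 := by rw [← lie_skew, hZ X, neg_zero]
    have h2 : ⁅Y, Z⁆ = 0 := by rw [← lie_skew, hZ Y, neg_zero]
    rw [h1, h2, map_zero] at h
    simpa using h
  set O : LieSubmodule ℝ g g :=
    { toSubmodule := orth ω (zc g)
      lie_mem := fun {x m} _ => fun Z hZ => horth x m Z hZ } with hO
  have hlcs : LieModule.lowerCentralSeries ℝ g g 1 ≤ O := by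
    have : LieModule.lowerCentralSeries ℝ g g 1
        = ⁅(⊤ : LieIdeal ℝ g), (⊤ : LieSubmodule ℝ g g)⁆ := by
      simp [LieModule.lowerCentralSeries_succ]
    rw [this, LieSubmodule.lie_le_iff]
    intro x _ m _ Z hZ
    exact horth x m Z hZ
  have hdisj : Disjoint (LieModule.lowerCentralSeries ℝ g g 1)
      (LieModule.maxTrivSubmodule ℝ g g) := by
    rw [disjoint_iff, LieSubmodule.eq_bot_iff]
    intro m hm
    rw [LieSubmodule.mem_inf] at hm
    obtain ⟨hm1, hm2⟩ := hm
    rw [LieModule.mem_maxTrivSubmodule] at hm2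
    have hmz : m ∈ zc g := fun y => by rw [← lie_skew, hm2 y, neg_zero]
    exact hznd m hmz (fun Y hY => hlcs hm1 Y hY)
  have := (LieModule.disjoint_lowerCentralSeries_maxTrivSubmodule_iff ℝ g g).mp hdisj
  intro X Y
  exact trivial_lie_zero g g X Y

end Stmt4
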